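/- Let A be an adjacency matrix of a simple graph on M vertices (a real symmetric M×M matrix with zero diagonal and entries in {0,1}), let π be a permutation of Fin M, and define Ã by Ã i j = A (π i) (π j). Fix a pattern n₀ : Fin M → ℕ, and for any real symmetric M×M matrix B and index k : Fin M define the partition-averaged photon distribution s_k(B) = ∑_{τ ∈ Perm(Fin M)} (n₀ (τ k)) · (∏ᵢ (n₀ i)!)⁻¹ · (haf(B ⊘ J_{n₀ ∘ τ}))². Then for every k : Fin M, s_k(Ã) = s_{π k}(A); that is, the partition-averaged photon distributions of isomorphic graphs are identical up to the permutation π of output modes. -/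

import Mathlib

/-!
Relabelling the modes by `π` is a simultaneous row/column permutation: `Ã ⊘ J_{n₀ ∘ τ π}` is
`A ⊘ J_{n₀ ∘ τ}` with its indices `(i, a)` renamed to `(π i, a)`. A hafnian is invariant under
renaming indices, since the renaming carries perfect matchings bijectively to perfect matchings
and preserves the weight of each pair. Substituting `τ ↦ τ π` in the sum over `τ` then matches
the summands of `s_k(Ã)` and `s_{π k}(A)` term by term.
-/

open scoped Classical in
/-- The hafnian of a matrix: the sum over all partitions of the index type into
unordered pairs (perfect matchings) of the products of the corresponding entries.
For a symmetric matrix `B` the term `(∑ u ∈ p, ∑ v ∈ p.erase u, B u v) / 2`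
equals `B u v` for the pair `p = {u, v}`. -/
noncomputable def hafnian {ι : Type*} [Fintype ι] [DecidableEq ι]
    (B : Matrix ι ι ℝ) : ℝ :=
  ∑ Mch ∈ Finset.univ.filter
      (fun Mch : Finset (Finset ι) =>
        (∀ p ∈ Mch, p.card = 2) ∧ ∀ x : ι, ∃! p, p ∈ Mch ∧ x ∈ p),
    ∏ p ∈ Mch, (∑ u ∈ p, ∑ v ∈ p.erase u, B u v) / 2

/-- The reduced Kronecker product `A ⊘ J_n`, indexed by `Σ i, Fin (n i)`,
whose `((i,a),(j,b))` entry is `A i j`. -/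
def rkron {ι : Type*} (A : Matrix ι ι ℝ) (n : ι → ℕ) :
    Matrix ((i : ι) × Fin (n i)) ((i : ι) × Fin (n i)) ℝ :=
  fun x y => A x.1 y.1

def IsPerfectMatching {ι : Type*} (Mch : Finset (Finset ι)) : Prop :=
  (∀ p ∈ Mch, p.card = 2) ∧ ∀ x : ι, ∃! p, p ∈ Mch ∧ x ∈ p

theorem IsPerfectMatching.finsetCongr {ι κ : Type*} {Mch : Finset (Finset ι)}
    (h : IsPerfectMatching Mch) (e : ι ≃ κ) :
    IsPerfectMatching (e.finsetCongr.finsetCongr Mch) := by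
  obtain ⟨hcard, huniq⟩ := h
  refine ⟨?_, fun x => ?_⟩
  · simp only [Equiv.finsetCongr_apply, Finset.mem_map_equiv]
    intro p hp
    simpa using hcard _ hp
  · obtain ⟨p, ⟨hpM, hxp⟩, hp⟩ := huniq (e.symm x)
    refine ⟨e.finsetCongr p, ⟨Finset.mem_map_of_mem _ hpM, Finset.mem_map_equiv.2 hxp⟩, ?_⟩
    rintro q ⟨hqM, hxq⟩
    rw [← e.finsetCongr.apply_symm_apply q,
      hp _ ⟨Finset.mem_map_equiv.1 hqM, Finset.mem_map_of_mem e.symm.toEmbedding hxq⟩]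

theorem isPerfectMatching_finsetCongr_iff {ι κ : Type*} (Mch : Finset (Finset ι)) (e : ι ≃ κ) :
    IsPerfectMatching (e.finsetCongr.finsetCongr Mch) ↔ IsPerfectMatching Mch := by
  refine ⟨fun h => ?_, fun h => h.finsetCongr e⟩
  have := h.finsetCongr e.symm
  rwa [← Equiv.finsetCongr_symm, ← Equiv.finsetCongr_symm, Equiv.symm_apply_apply] at this

theorem hafnian_submatrix {ι κ : Type*} [Fintype ι] [DecidableEq ι] [Fintype κ] [DecidableEq κ]
    (B : Matrix κ κ ℝ) (e : ι ≃ κ) : hafnian (B.submatrix e e) = hafnian B := by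
  unfold hafnian
  refine Finset.sum_equiv e.finsetCongr.finsetCongr (fun Mch => ?_) (fun Mch _ => ?_)
  · simp only [Finset.mem_filter, Finset.mem_univ, true_and]
    exact (isPerfectMatching_finsetCongr_iff Mch e).symm
  · simp only [Equiv.finsetCongr_apply, Finset.prod_map, Equiv.toEmbedding_apply, Finset.sum_map]
    refine Finset.prod_congr rfl fun p _ => ?_
    congr 1
    refine Finset.sum_congr rfl fun u _ => ?_
    rw [← Equiv.toEmbedding_apply, ← Finset.map_erase, Finset.sum_map]
    rfl

theorem rkron_submatrix {ι κ : Type*} (A : Matrix κ κ ℝ) (n : κ → ℕ) (f : ι → κ) :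
    rkron (A.submatrix f f) (n ∘ f) =
      (rkron A n).submatrix (Sigma.map f fun _ => id) (Sigma.map f fun _ => id) :=
  rfl

theorem hafnian_rkron_submatrix {ι κ : Type*} [Fintype ι] [DecidableEq ι] [Fintype κ]
    [DecidableEq κ] (A : Matrix κ κ ℝ) (n : κ → ℕ) (e : ι ≃ κ) :
    hafnian (rkron (A.submatrix e e) (n ∘ e)) = hafnian (rkron A n) := by
  rw [rkron_submatrix]
  exact hafnian_submatrix _ (Equiv.sigmaCongrLeft e (β := fun j => Fin (n j)))

theorem stmt_17_general (M : ℕ) (A : Matrix (Fin M) (Fin M) ℝ)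
    (π : Equiv.Perm (Fin M)) (Atil : Matrix (Fin M) (Fin M) ℝ)
    (hAtil : ∀ i j, Atil i j = A (π i) (π j))
    (n₀ : Fin M → ℕ)
    (s : Matrix (Fin M) (Fin M) ℝ → Fin M → ℝ)
    (hs : ∀ B k, s B k =
      ∑ τ : Equiv.Perm (Fin M),
        (n₀ (τ k) : ℝ) * ((∏ i, Nat.factorial (n₀ i) : ℕ) : ℝ)⁻¹ *
          hafnian (rkron B (n₀ ∘ τ)) ^ 2) :
    ∀ k, s Atil k = s A (π k) := by
  intro k
  obtain rfl : Atil = A.submatrix π π := Matrix.ext hAtil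
  rw [hs, hs, ← Equiv.sum_comp (Equiv.mulRight π)]
  refine Finset.sum_congr rfl fun τ _ => ?_
  rw [Equiv.coe_mulRight, Equiv.Perm.coe_mul, ← Function.comp_assoc, hafnian_rkron_submatrix,
    Function.comp_apply]

theorem stmt_17 (M : ℕ) (A : Matrix (Fin M) (Fin M) ℝ)
    (hAsymm : A.IsSymm) (hAdiag : ∀ i, A i i = 0)
    (hA01 : ∀ i j, A i j = 0 ∨ A i j = 1)
    (π : Equiv.Perm (Fin M)) (Atil : Matrix (Fin M) (Fin M) ℝ)
    (hAtil : ∀ i j, Atil i j = A (π i) (π j))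
    (n₀ : Fin M → ℕ)
    (s : Matrix (Fin M) (Fin M) ℝ → Fin M → ℝ)
    (hs : ∀ B k, s B k =
      ∑ τ : Equiv.Perm (Fin M),
        (n₀ (τ k) : ℝ) * ((∏ i, Nat.factorial (n₀ i) : ℕ) : ℝ)⁻¹ *
          hafnian (rkron B (n₀ ∘ τ)) ^ 2) :
    ∀ k, s Atil k = s A (π k) :=
  stmt_17_general M A π Atil hAtil n₀ s hs
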